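/- The regularization seminorm is nonincreasing in λ: for x^{(λ)} = (AᵀA + λ²MᵀM)⁻¹Aᵀb with ker(A) ∩ ker(M) = {0}, if 0 < λ₁ ≤ λ₂ then ‖M x^{(λ₂)}‖₂ ≤ ‖M x^{(λ₁)}‖₂. -/

import Mathlib

/-!
`x^{(λ)}` solves the normal equations `(AᵀA + λ²MᵀM) x = Aᵀb`, so it minimises the convex quadratic
`J_λ(x) = ‖Ax‖² + λ²‖Mx‖² - 2⟨x, Aᵀb⟩`. Adding `J_{λ₁}(x₁) ≤ J_{λ₁}(x₂)` and `J_{λ₂}(x₂) ≤ J_{λ₂}(x₁)`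
cancels everything but `(λ₂² - λ₁²)(‖Mx₂‖² - ‖Mx₁‖²) ≤ 0`.
-/

open Matrix

noncomputable def sqnorm {k : ℕ} (v : Fin k → ℝ) : ℝ := ∑ i, (v i)^2

lemma sqnorm_eq_dotProduct {k : ℕ} (v : Fin k → ℝ) : sqnorm v = v ⬝ᵥ v := by
  simp only [sqnorm, dotProduct, sq]

namespace Matrix

variable {n : Type*} [Fintype n]

theorem PosSemidef.dotProduct_mulVec_sub_le_of_mulVec_eq {B : Matrix n n ℝ} (hB : B.PosSemidef)
    {x c : n → ℝ} (hx : B *ᵥ x = c) (y : n → ℝ) :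
    x ⬝ᵥ B *ᵥ x - 2 * (x ⬝ᵥ c) ≤ y ⬝ᵥ B *ᵥ y - 2 * (y ⬝ᵥ c) := by
  have hBt : Bᵀ = B := by simpa [conjTranspose_eq_transpose_of_trivial] using hB.isHermitian.eq
  have hsymm : y ⬝ᵥ B *ᵥ x = x ⬝ᵥ B *ᵥ y := by
    rw [← dotProduct_transpose_mulVec, hBt]
  have hgap : y ⬝ᵥ B *ᵥ y - 2 * (y ⬝ᵥ c) - (x ⬝ᵥ B *ᵥ x - 2 * (x ⬝ᵥ c))
      = (y - x) ⬝ᵥ B *ᵥ (y - x) := by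
    rw [← hx, mulVec_sub, dotProduct_sub, sub_dotProduct, sub_dotProduct, hsymm]
    ring
  have hnonneg := hB.dotProduct_mulVec_nonneg (y - x)
  rw [star_trivial] at hnonneg
  linarith

end Matrix

section Tikhonov

variable {l n p : Type*} [Fintype l] [Fintype n] [Fintype p]

noncomputable def tikhonovMatrix (A : Matrix l n ℝ) (M : Matrix p n ℝ) (lam : ℝ) : Matrix n n ℝ :=
  Aᵀ * A + lam ^ 2 • (Mᵀ * M)

variable (A : Matrix l n ℝ) (M : Matrix p n ℝ)

theorem dotProduct_tikhonovMatrix_mulVec (lam : ℝ) (x : n → ℝ) :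
    x ⬝ᵥ tikhonovMatrix A M lam *ᵥ x = A *ᵥ x ⬝ᵥ A *ᵥ x + lam ^ 2 * (M *ᵥ x ⬝ᵥ M *ᵥ x) := by
  rw [tikhonovMatrix, add_mulVec, smul_mulVec, ← mulVec_mulVec, ← mulVec_mulVec, dotProduct_add,
    dotProduct_smul, dotProduct_transpose_mulVec, dotProduct_transpose_mulVec, smul_eq_mul]

theorem posSemidef_tikhonovMatrix (lam : ℝ) : (tikhonovMatrix A M lam).PosSemidef := by
  have hA := posSemidef_conjTranspose_mul_self A
  have hM := posSemidef_conjTranspose_mul_self M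
  rw [conjTranspose_eq_transpose_of_trivial] at hA hM
  exact hA.add (hM.smul (sq_nonneg lam))

theorem posDef_tikhonovMatrix (hker : ∀ x, A *ᵥ x = 0 → M *ᵥ x = 0 → x = 0) {lam : ℝ}
    (hlam : lam ≠ 0) : (tikhonovMatrix A M lam).PosDef := by
  refine .of_dotProduct_mulVec_pos (posSemidef_tikhonovMatrix A M lam).isHermitian fun x hx ↦ ?_
  rw [star_trivial, dotProduct_tikhonovMatrix_mulVec]
  have hA : 0 ≤ A *ᵥ x ⬝ᵥ A *ᵥ x := Finset.sum_nonneg fun _ _ ↦ mul_self_nonneg _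
  have hM : 0 ≤ M *ᵥ x ⬝ᵥ M *ᵥ x := Finset.sum_nonneg fun _ _ ↦ mul_self_nonneg _
  have hlam2 : 0 < lam ^ 2 := by positivity
  by_contra! hle
  refine hx (hker x (dotProduct_self_eq_zero.1 ?_) (dotProduct_self_eq_zero.1 ?_)) <;> nlinarith

theorem tikhonovMatrix_mulVec_inv_mulVec [DecidableEq n]
    (hker : ∀ x, A *ᵥ x = 0 → M *ᵥ x = 0 → x = 0) {lam : ℝ} (hlam : lam ≠ 0) (c : n → ℝ) :
    tikhonovMatrix A M lam *ᵥ ((tikhonovMatrix A M lam)⁻¹ *ᵥ c) = c := by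
  have hunit := (posDef_tikhonovMatrix A M hker hlam).isUnit
  rw [mulVec_mulVec, mul_nonsing_inv _ ((isUnit_iff_isUnit_det _).1 hunit), one_mulVec]

theorem seminorm_le_of_tikhonovMatrix_mulVec_eq {lam₁ lam₂ : ℝ} (hlam : lam₁ ^ 2 < lam₂ ^ 2)
    {x₁ x₂ c : n → ℝ} (hx₁ : tikhonovMatrix A M lam₁ *ᵥ x₁ = c)
    (hx₂ : tikhonovMatrix A M lam₂ *ᵥ x₂ = c) :
    M *ᵥ x₂ ⬝ᵥ M *ᵥ x₂ ≤ M *ᵥ x₁ ⬝ᵥ M *ᵥ x₁ := by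
  have h₁ := (posSemidef_tikhonovMatrix A M lam₁).dotProduct_mulVec_sub_le_of_mulVec_eq hx₁ x₂
  have h₂ := (posSemidef_tikhonovMatrix A M lam₂).dotProduct_mulVec_sub_le_of_mulVec_eq hx₂ x₁
  rw [dotProduct_tikhonovMatrix_mulVec, dotProduct_tikhonovMatrix_mulVec] at h₁ h₂
  nlinarith

end Tikhonov

/-- The regularization seminorm is nonincreasing in λ: for
`x^{(λ)} = (AᵀA + λ²MᵀM)⁻¹Aᵀb` with trivial kernel intersection, if
`0 < λ₁ ≤ λ₂` then `‖M x^{(λ₂)}‖₂ ≤ ‖M x^{(λ₁)}‖₂`. -/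
theorem tikhonov_seminorm_antitone_in_lambda {m n p : ℕ}
    (A : Matrix (Fin m) (Fin n) ℝ) (M : Matrix (Fin p) (Fin n) ℝ)
    (b : Fin m → ℝ)
    (hker : ∀ x : Fin n → ℝ, A *ᵥ x = 0 → M *ᵥ x = 0 → x = 0)
    (lam₁ lam₂ : ℝ) (h0 : 0 < lam₁) (h12 : lam₁ ≤ lam₂)
    (x₁ x₂ : Fin n → ℝ)
    (hx₁ : x₁ = (Aᵀ * A + lam₁ ^ 2 • (Mᵀ * M))⁻¹ *ᵥ (Aᵀ *ᵥ b))
    (hx₂ : x₂ = (Aᵀ * A + lam₂ ^ 2 • (Mᵀ * M))⁻¹ *ᵥ (Aᵀ *ᵥ b)) :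
    Real.sqrt (sqnorm (M *ᵥ x₂)) ≤ Real.sqrt (sqnorm (M *ᵥ x₁)) := by
  rcases h12.eq_or_lt with rfl | hlt
  · rw [hx₁, hx₂]
  have hnormal₁ : tikhonovMatrix A M lam₁ *ᵥ x₁ = Aᵀ *ᵥ b :=
    hx₁ ▸ tikhonovMatrix_mulVec_inv_mulVec A M hker h0.ne' _
  have hnormal₂ : tikhonovMatrix A M lam₂ *ᵥ x₂ = Aᵀ *ᵥ b :=
    hx₂ ▸ tikhonovMatrix_mulVec_inv_mulVec A M hker (h0.trans hlt).ne' _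
  rw [sqnorm_eq_dotProduct, sqnorm_eq_dotProduct]
  exact Real.sqrt_le_sqrt <| seminorm_le_of_tikhonovMatrix_mulVec_eq A M
    (pow_lt_pow_left₀ hlt h0.le two_ne_zero) hnormal₁ hnormal₂
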